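/- arXiv:2112.08581 — 3 statements merged into one kernel-verified Lean document; each statement's English description precedes it below -/
import Mathlib

section
/- Let F ⊆ {(k, n-k) : k ∈ [0..n]} be a set of points on the Pareto front of OneMinMax. Then the number of points (v_1, v_2) ∈ F for which not both neighbors (v_1+1, v_2-1) and (v_1-1, v_2+1) lie in F is at most 2⌈(n+1)/3⌉: out of any three consecutive front points (w, n-w), (w+1, n-w-1), (w+2, n-w-2), at most two can be in F while lacking both neighbors in F. -/
/-!
Project the deficient points of `F` to their first coordinates; on the front this is injective.
Among three consecutive front points all in `F`, the middle one has both neighbours in `F`, so the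
projection contains no three consecutive integers. Cutting `[0, n]` into `⌈(n+1)/3⌉` blocks of
three consecutive integers, each block then meets the projection in at most two points.
-/

open Finset

theorem card_le_two_mul_of_not_three_consecutive {A : Finset ℕ} {m : ℕ}
    (hA : ∀ k ∈ A, k < 3 * m) (hgap : ∀ k, k ∈ A → k + 1 ∈ A → k + 2 ∉ A) :
    #A ≤ 2 * m := by
  have hblock : ∀ j ∈ range m, #{k ∈ A | k / 3 = j} ≤ 2 := by
    intro j _
    by_contra! hcard
    have hfull : {k ∈ A | k / 3 = j} = Ico (3 * j) (3 * j + 3) :=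
      eq_of_subset_of_card_le
        (fun k hk => by simp only [mem_filter, mem_Ico] at hk ⊢; omega)
        (by simp only [Nat.card_Ico]; omega)
    have hmem : ∀ i < 3, 3 * j + i ∈ A := fun i hi => by
      have : 3 * j + i ∈ {k ∈ A | k / 3 = j} := hfull ▸ mem_Ico.mpr ⟨by omega, by omega⟩
      exact (mem_filter.mp this).1
    exact hgap _ (hmem 0 (by norm_num)) (hmem 1 (by norm_num)) (hmem 2 (by norm_num))
  have hmaps : ∀ k ∈ A, k / 3 ∈ range m := fun k hk => mem_range.mpr (by have := hA k hk; omega)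
  simpa [mul_comm] using card_le_mul_card_image_of_maps_to hmaps 2 hblock

def missingNeighbors (F : Finset (ℕ × ℕ)) : Finset (ℕ × ℕ) :=
  F.filter (fun p => ¬ ((p.1 + 1, p.2 - 1) ∈ F ∧ (p.1 - 1, p.2 + 1) ∈ F))

section Front

variable {n : ℕ} {F : Finset (ℕ × ℕ)}

theorem card_missingNeighbors_eq_card_image_fst (hF : ∀ p ∈ F, ∃ k ≤ n, p = (k, n - k)) :
    #(missingNeighbors F) = #((missingNeighbors F).image Prod.fst) := by
  refine (card_image_of_injOn fun p hp q hq hpq => ?_).symm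
  obtain ⟨k, -, rfl⟩ := hF p (filter_subset _ _ hp)
  obtain ⟨l, -, rfl⟩ := hF q (filter_subset _ _ hq)
  simp_all

theorem mem_and_le_of_mem_image_fst_missingNeighbors
    (hF : ∀ p ∈ F, ∃ k ≤ n, p = (k, n - k)) {i : ℕ}
    (hi : i ∈ (missingNeighbors F).image Prod.fst) : (i, n - i) ∈ F ∧ i ≤ n := by
  obtain ⟨p, hp, rfl⟩ := mem_image.mp hi
  obtain ⟨i, hin, rfl⟩ := hF p (filter_subset _ _ hp)
  exact ⟨filter_subset _ _ hp, hin⟩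

theorem not_three_consecutive_fst_missingNeighbors (hF : ∀ p ∈ F, ∃ k ≤ n, p = (k, n - k))
    (k : ℕ) (h₀ : k ∈ (missingNeighbors F).image Prod.fst)
    (h₁ : k + 1 ∈ (missingNeighbors F).image Prod.fst) :
    k + 2 ∉ (missingNeighbors F).image Prod.fst := by
  intro h₂
  obtain ⟨p, hp, hp₁⟩ := mem_image.mp h₁
  obtain ⟨j, -, rfl⟩ := hF p (filter_subset _ _ hp)
  obtain rfl : j = k + 1 := hp₁
  obtain ⟨hleft, -⟩ := mem_and_le_of_mem_image_fst_missingNeighbors hF h₀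
  obtain ⟨hright, hle⟩ := mem_and_le_of_mem_image_fst_missingNeighbors hF h₂
  refine (mem_filter.mp hp).2 ⟨?_, ?_⟩
  · convert hright using 2
    omega
  · convert hleft using 2 <;> omega

end Front

/-- For a subset F of the Pareto front {(k, n-k) : k ∈ [0..n]} of OneMinMax,
the number of points of F lacking at least one of the two neighbors
(v₁+1, v₂-1), (v₁-1, v₂+1) in F is at most 2⌈(n+1)/3⌉. -/
theorem omm_front_missing_neighbors (n : ℕ) (F : Finset (ℕ × ℕ))
    (hF : ∀ p ∈ F, ∃ k ≤ n, p = (k, n - k)) :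
    (F.filter (fun p => ¬ ((p.1 + 1, p.2 - 1) ∈ F ∧ (p.1 - 1, p.2 + 1) ∈ F))).card
      ≤ 2 * ((n + 1 + 2) / 3) := by
  change #(missingNeighbors F) ≤ _
  rw [card_missingNeighbors_eq_card_image_fst hF]
  refine card_le_two_mul_of_not_three_consecutive (fun k hk => ?_)
    (not_three_consecutive_fst_missingNeighbors hF)
  have := (mem_and_le_of_mem_image_fst_missingNeighbors hF hk).2
  omega
end

section
/- Let P be a population of at most n+1 individuals on the Pareto front [0..n], and Δ a positive integer. Let F' be the set of values v ∈ [0..n] such that at least Δ+1 individuals of P have value v-1 or v+1. Then |F'| ≤ 2(n+1)/(Δ+1). -/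
/-! Double counting the pairs (individual, crowded value it neighbours): each crowded value has
at least Δ + 1 neighbouring individuals, while each of the at most n + 1 individuals neighbours
at most two values, so (Δ + 1) |F'| ≤ 2 (n + 1). -/

open Finset

theorem Multiset.card_mul_le_card_mul_of_countP {α β : Type*} (r : β → α → Prop)
    [∀ v w, Decidable (r v w)] {s : Finset β} {P : Multiset α} {m k : ℕ}
    (hm : ∀ v ∈ s, m ≤ P.countP (r v)) (hk : ∀ w ∈ P, #{v ∈ s | r v w} ≤ k) :
    #s * m ≤ Multiset.card P * k := by
  classical
  have hcount (v : β) :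
      P.countP (r v) = #(P.toEnumFinset.bipartiteAbove (fun v p => r v p.1) v) := by
    conv_lhs => rw [← Multiset.map_toEnumFinset_fst P]
    rw [Multiset.countP_map]
    rfl
  simpa [Multiset.card_toEnumFinset] using
    card_nsmul_le_card_nsmul (fun v (p : α × ℕ) => r v p.1) (t := P.toEnumFinset)
      (fun v hv => (hm v hv).trans_eq (hcount v))
      (fun p hp => hk p.1 (Multiset.mem_of_mem_toEnumFinset hp))

theorem Nat.card_filter_succ_eq_or_eq_succ_le_two (s : Finset ℕ) (w : ℕ) :
    #{v ∈ s | w + 1 = v ∨ w = v + 1} ≤ 2 :=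
  calc #{v ∈ s | w + 1 = v ∨ w = v + 1} ≤ #({w + 1, w - 1} : Finset ℕ) :=
        card_le_card fun v hv => by
          simp only [mem_filter] at hv
          simp only [mem_insert, mem_singleton]
          omega
    _ ≤ 2 := card_le_two

theorem crowded_values_bound_general (n Δ : ℕ)
    (P : Multiset ℕ) (hcard : Multiset.card P ≤ n + 1) :
    ((((Finset.range (n + 1)).filter
        (fun v => Δ + 1 ≤ Multiset.countP (fun w => w + 1 = v ∨ w = v + 1) P)).card : ℝ))
      ≤ 2 * (n + 1) / (Δ + 1) := by
  set F := (Finset.range (n + 1)).filter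
      (fun v => Δ + 1 ≤ Multiset.countP (fun w => w + 1 = v ∨ w = v + 1) P)
  have hdouble : #F * (Δ + 1) ≤ Multiset.card P * 2 :=
    Multiset.card_mul_le_card_mul_of_countP (fun v w => w + 1 = v ∨ w = v + 1)
      (fun _ hv => (mem_filter.mp hv).2)
      (fun w _ => Nat.card_filter_succ_eq_or_eq_succ_le_two F w)
  have hnat : #F * (Δ + 1) ≤ 2 * (n + 1) := by omega
  rw [le_div_iff₀ (by positivity)]
  exact_mod_cast hnat

/-- If a population P of at most n+1 individuals takes values in [0..n], and
F' is the set of values v ∈ [0..n] such that at least Δ+1 individuals of P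
have value v-1 or v+1, then |F'| ≤ 2(n+1)/(Δ+1). -/
theorem crowded_values_bound (n Δ : ℕ) (hΔ : 1 ≤ Δ)
    (P : Multiset ℕ) (hval : ∀ w ∈ P, w ≤ n) (hcard : Multiset.card P ≤ n + 1) :
    ((((Finset.range (n + 1)).filter
        (fun v => Δ + 1 ≤ Multiset.countP (fun w => w + 1 = v ∨ w = v + 1) P)).card : ℝ))
      ≤ 2 * (n + 1) / (Δ + 1) :=
  crowded_values_bound_general n Δ P hcard
end

section
/- Consider one-bit mutation applied independently to each of n+1 parents whose objective values on the OneMinMax front are such that value v-1 is covered by a parents and value v+1 is covered by b parents, with |v - (v±1)| handled as: each parent with value v-1 produces an offspring with value v with probability (n-v+1)/n, each parent with value v+1 with probability (v+1)/n. If a + b ≤ Δ and v ∈ [⌊εn/5⌋+1 .. n-⌊εn/5⌋-1], then the probability that no offspring has value v is at least (ε/5 - 2/n)^Δ. -/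
/-!
Write `c = ε/5 - 2/n`. The two non-generation probabilities are `(v - 1)/n` and
`(n - v - 1)/n`, and the window for `v` keeps both `v` and `n - v` above `εn/5`, so each
of them is at least `c`. Since `0 ≤ c ≤ 1` (by `n ≥ 10/ε`), the product of `a + b ≤ Δ`
such factors is at least `c ^ (a + b) ≥ c ^ Δ`.
-/

theorem pow_le_pow_mul_pow_of_le {R : Type*} [Semiring R] [PartialOrder R] [IsOrderedRing R]
    {c x y : R} {a b m : ℕ} (hc0 : 0 ≤ c) (hc1 : c ≤ 1) (hx : c ≤ x) (hy : c ≤ y)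
    (hab : a + b ≤ m) : c ^ m ≤ x ^ a * y ^ b :=
  calc c ^ m ≤ c ^ (a + b) := pow_le_pow_of_le_one hc0 hc1 hab
    _ = c ^ a * c ^ b := pow_add c a b
    _ ≤ x ^ a * y ^ b :=
      mul_le_mul (pow_le_pow_left₀ hc0 hx a) (pow_le_pow_left₀ hc0 hy b) (pow_nonneg hc0 b)
        (pow_nonneg (hc0.trans hx) a)

theorem sub_two_div_le_sub_one_div {t k n : ℝ} (hn : 0 < n) (h : t * n < k) :
    t - 2 / n ≤ (k - 1) / n := by
  have htk : t < k / n := (lt_div_iff₀ hn).2 h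
  have h12 : 1 / n ≤ 2 / n := by gcongr; norm_num
  rw [sub_div]
  linarith

/-- One-bit mutation of parents adjacent to a front value v of OneMinMax: each
of the a parents with value v-1 independently creates an offspring with value v
with probability (n-v+1)/n, and each of the b parents with value v+1 does so
with probability (v+1)/n. If a + b ≤ Δ = ⌈5/ε⌉ - 1 and
v ∈ [⌊εn/5⌋+1 .. n-⌊εn/5⌋-1], then the probability that no offspring has
value v, namely (1-(n-v+1)/n)^a · (1-(v+1)/n)^b, is at least (ε/5 - 2/n)^Δ. -/
theorem prob_value_not_generated (n v a b : ℕ) (ε : ℝ) (hε : 0 < ε) (hε1 : ε < 1)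
    (hn : 10 / ε ≤ (n : ℝ))
    (hab : a + b ≤ ⌈5 / ε⌉₊ - 1)
    (hv1 : Nat.floor (ε * n / 5) + 1 ≤ v)
    (hv2 : v ≤ n - Nat.floor (ε * n / 5) - 1) :
    (1 - ((n : ℝ) - v + 1) / n) ^ a * (1 - ((v : ℝ) + 1) / n) ^ b
      ≥ (ε / 5 - 2 / n) ^ (⌈5 / ε⌉₊ - 1) := by
  have hn0 : (0 : ℝ) < n := (div_pos (by norm_num) hε).trans_le hn
  have hv_left : ε * n / 5 < v := Nat.lt_of_floor_lt hv1
  have hv_right : ε * n / 5 < (n : ℝ) - v := by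
    rw [← Nat.cast_sub (by omega)]
    exact Nat.lt_of_floor_lt (by omega)
  have hc0 : 0 ≤ ε / 5 - 2 / n := by
    have : 10 ≤ n * ε := (div_le_iff₀ hε).1 hn
    rw [sub_nonneg, div_le_iff₀ hn0]
    linarith
  have hc1 : ε / 5 - 2 / n ≤ 1 := by
    have : 0 ≤ 2 / (n : ℝ) := by positivity
    linarith
  refine pow_le_pow_mul_pow_of_le hc0 hc1 ?_ ?_ hab
  · rw [one_sub_div hn0.ne', show (n : ℝ) - (n - v + 1) = v - 1 by ring]
    exact sub_two_div_le_sub_one_div hn0 (by linarith)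
  · rw [one_sub_div hn0.ne', show (n : ℝ) - (v + 1) = (n - v) - 1 by ring]
    exact sub_two_div_le_sub_one_div hn0 (by linarith)
end
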